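/- arXiv:2009.03845 — 5 statements merged into one kernel-verified Lean document; each statement's English description precedes it below -/
import Mathlib

section
/- Let N ≥ 2, α > 0, and r > 1. For every β > r there exists a constant C = C(β, N, r) > 0 such that (φ_N(α u))^r ≤ C · φ_N(β α u) for all u ≥ 0. -/
/-!
Split `φ_N(βt)` at `rt + (β - r)t`: comparing power series term by term,
`φ_N(a + b) ≥ eᵃ bᵐ / m!` with `m = N - 1`, while `φ_N(t) ≤ tᵐ eᵗ` and `φ_N(t) ≤ eᵗ` give
`φ_N(t)^r = φ_N(t) · φ_N(t)^(r-1) ≤ tᵐ e^{rt}`. Hence `C = m! / (β - r)ᵐ` works.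
-/

/-- φ_N(t) = e^t − Σ_{j=0}^{N−2} t^j/j! -/
noncomputable def phiN (N : ℕ) (t : ℝ) : ℝ :=
  Real.exp t - ∑ j ∈ Finset.range (N - 1), t ^ j / (Nat.factorial j : ℝ)

open Finset Real
open scoped Nat

theorem choose_mul_pow_mul_pow_le_add_pow {R : Type*} [CommSemiring R] [PartialOrder R]
    [IsOrderedRing R] {a b : R} (ha : 0 ≤ a) (hb : 0 ≤ b) (k m : ℕ) :
    ((k + m).choose k : R) * a ^ k * b ^ m ≤ (a + b) ^ (k + m) := by
  rw [add_pow]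
  have hk : k ∈ range (k + m + 1) := mem_range.2 (by omega)
  convert single_le_sum (f := fun i => a ^ i * b ^ (k + m - i) * ((k + m).choose i : R))
    (fun i _ => by positivity) hk using 1
  simp only [Nat.add_sub_cancel_left]
  ring

theorem pow_div_factorial_mul_pow_div_factorial_le {a b : ℝ} (ha : 0 ≤ a) (hb : 0 ≤ b)
    (k m : ℕ) : a ^ k / k ! * (b ^ m / m !) ≤ (a + b) ^ (k + m) / (k + m)! := by
  calc a ^ k / k ! * (b ^ m / m !) = (k + m).choose k * a ^ k * b ^ m / (k + m)! := by
        rw [← Nat.add_choose_mul_factorial_mul_factorial, Nat.choose_symm_add]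
        have : ((k + m).choose m : ℝ) ≠ 0 := Nat.cast_ne_zero.2 (Nat.choose_pos (by omega)).ne'
        push_cast
        field_simp
    _ ≤ (a + b) ^ (k + m) / (k + m)! := by
        gcongr
        exact choose_mul_pow_mul_pow_le_add_pow ha hb k m

theorem exp_eq_tsum_pow_div_factorial (x : ℝ) : exp x = ∑' n, x ^ n / n ! := by
  rw [exp_eq_exp_ℝ]
  exact (NormedSpace.expSeries_div_hasSum_exp x).tsum_eq.symm

theorem exp_sub_sum_range_eq_tsum (x : ℝ) (m : ℕ) :
    exp x - ∑ j ∈ range m, x ^ j / j ! = ∑' k, x ^ (k + m) / (k + m)! := by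
  rw [exp_eq_tsum_pow_div_factorial,
    ← (summable_pow_div_factorial x).sum_add_tsum_nat_add m, add_sub_cancel_left]

theorem summable_pow_add_div_factorial (x : ℝ) (m : ℕ) :
    Summable fun k => x ^ (k + m) / (k + m)! :=
  (summable_nat_add_iff m).2 (summable_pow_div_factorial x)

theorem exp_sub_sum_range_le_pow_mul_exp {x : ℝ} (hx : 0 ≤ x) (m : ℕ) :
    exp x - ∑ j ∈ range m, x ^ j / j ! ≤ x ^ m * exp x := by
  rw [exp_sub_sum_range_eq_tsum, exp_eq_tsum_pow_div_factorial, ← tsum_mul_left]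
  refine (summable_pow_add_div_factorial x m).tsum_le_tsum (fun k => ?_)
    ((summable_pow_div_factorial x).mul_left _)
  calc x ^ (k + m) / (k + m)! ≤ x ^ (k + m) / k ! := by
        gcongr
        exact Nat.le_add_right k m
    _ = x ^ m * (x ^ k / k !) := by ring

theorem exp_mul_pow_div_factorial_le_exp_sub_sum_range {a b : ℝ} (ha : 0 ≤ a) (hb : 0 ≤ b)
    (m : ℕ) : exp a * (b ^ m / m !) ≤ exp (a + b) - ∑ j ∈ range m, (a + b) ^ j / j ! := by
  rw [exp_sub_sum_range_eq_tsum, exp_eq_tsum_pow_div_factorial, ← tsum_mul_right]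
  exact ((summable_pow_div_factorial a).mul_right _).tsum_le_tsum
    (fun k => pow_div_factorial_mul_pow_div_factorial_le ha hb k m)
    (summable_pow_add_div_factorial _ m)

theorem phiN_nonneg (N : ℕ) {t : ℝ} (ht : 0 ≤ t) : 0 ≤ phiN N t := by
  rw [phiN, exp_sub_sum_range_eq_tsum]
  exact tsum_nonneg fun k => by positivity

theorem phiN_le_exp (N : ℕ) {t : ℝ} (ht : 0 ≤ t) : phiN N t ≤ exp t :=
  sub_le_self _ (sum_nonneg fun j _ => by positivity)

theorem phiN_rpow_le {N : ℕ} {r t : ℝ} (hr : 1 ≤ r) (ht : 0 ≤ t) :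
    phiN N t ^ r ≤ t ^ (N - 1) * exp (r * t) := by
  have hφ := phiN_nonneg N ht
  calc phiN N t ^ r = phiN N t * phiN N t ^ (r - 1) := by
        rw [← rpow_one_add' hφ (by linarith), add_sub_cancel]
    _ ≤ t ^ (N - 1) * exp t * exp t ^ (r - 1) :=
        mul_le_mul (exp_sub_sum_range_le_pow_mul_exp ht _)
          (rpow_le_rpow hφ (phiN_le_exp N ht) (by linarith)) (by positivity) (by positivity)
    _ = t ^ (N - 1) * exp (r * t) := by
        rw [← exp_mul, mul_assoc, ← exp_add]
        congr 2
        ring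

theorem exp_mul_pow_div_factorial_le_phiN (N : ℕ) {a b : ℝ} (ha : 0 ≤ a) (hb : 0 ≤ b) :
    exp a * (b ^ (N - 1) / (N - 1)!) ≤ phiN N (a + b) :=
  exp_mul_pow_div_factorial_le_exp_sub_sum_range ha hb (N - 1)

theorem stmt_4_general (N : ℕ) (α r β : ℝ) (hα : 0 < α) (hr : 1 < r)
    (hβ : r < β) :
    ∃ C : ℝ, 0 < C ∧ ∀ u : ℝ, 0 ≤ u →
      (phiN N (α * u)) ^ r ≤ C * phiN N (β * α * u) := by
  have hβr : 0 < β - r := sub_pos.2 hβ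
  refine ⟨(N - 1)! / (β - r) ^ (N - 1), by positivity, fun u hu => ?_⟩
  have ht : 0 ≤ α * u := mul_nonneg hα.le hu
  rw [mul_assoc]
  generalize α * u = t at ht ⊢
  calc phiN N t ^ r ≤ t ^ (N - 1) * exp (r * t) := phiN_rpow_le hr.le ht
    _ = (N - 1)! / (β - r) ^ (N - 1) * (exp (r * t) * (((β - r) * t) ^ (N - 1) / (N - 1)!)) := by
        rw [mul_pow]
        field_simp
    _ ≤ (N - 1)! / (β - r) ^ (N - 1) * phiN N (r * t + (β - r) * t) := by
        gcongr
        exact exp_mul_pow_div_factorial_le_phiN N (by positivity) (by positivity)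
    _ = (N - 1)! / (β - r) ^ (N - 1) * phiN N (β * t) := by ring_nf

/-- Let N ≥ 2, α > 0, r > 1. For every β > r there is C > 0 such that
(φ_N(α u))^r ≤ C · φ_N(β α u) for all u ≥ 0. -/
theorem stmt_4 (N : ℕ) (hN : 2 ≤ N) (α r β : ℝ) (hα : 0 < α) (hr : 1 < r)
    (hβ : r < β) :
    ∃ C : ℝ, 0 < C ∧ ∀ u : ℝ, 0 ≤ u →
      (phiN N (α * u)) ^ r ≤ C * phiN N (β * α * u) :=
  stmt_4_general N α r β hα hr hβ
end

section
/- Let f : ℝ → ℝ be continuous with s·f(s) ≥ 0 for all s, and for k ∈ ℕ define f_k by the piecewise formula f_k(s) = −k[G(−k−1/k) − G(−k)] for s ≤ −k; f_k(s) = −k[G(s−1/k) − G(s)] for −k ≤ s ≤ −1/k; f_k(s) = k²s[G(−2/k) − G(−1/k)] for −1/k ≤ s ≤ 0; f_k(s) = k²s[G(2/k) − G(1/k)] for 0 ≤ s ≤ 1/k; f_k(s) = k[G(s+1/k) − G(s)] for 1/k ≤ s ≤ k; f_k(s) = k[G(k+1/k) − G(k)] for s ≥ k, where G(s) = ∫₀^s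 f(ξ)dξ. Then s·f_k(s) ≥ 0 for every s ∈ ℝ. -/
/-- G(s) = ∫₀^s f(ξ) dξ -/
noncomputable def Gfun (f : ℝ → ℝ) (s : ℝ) : ℝ := ∫ ξ in (0:ℝ)..s, f ξ

/-- The Strauss approximation f_k of f, defined piecewise via G = Gfun f. -/
noncomputable def strauss (f : ℝ → ℝ) (k : ℕ) (s : ℝ) : ℝ :=
  let G := Gfun f
  if s ≤ -(k:ℝ) then -(k:ℝ) * (G (-(k:ℝ) - 1/(k:ℝ)) - G (-(k:ℝ)))
  else if s ≤ -(1/(k:ℝ)) then -(k:ℝ) * (G (s - 1/(k:ℝ)) - G s)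
  else if s ≤ 0 then (k:ℝ)^2 * s * (G (-(2/(k:ℝ))) - G (-(1/(k:ℝ))))
  else if s ≤ 1/(k:ℝ) then (k:ℝ)^2 * s * (G (2/(k:ℝ)) - G (1/(k:ℝ)))
  else if s ≤ (k:ℝ) then (k:ℝ) * (G (s + 1/(k:ℝ)) - G s)
  else (k:ℝ) * (G ((k:ℝ) + 1/(k:ℝ)) - G (k:ℝ))

lemma Gfun_diff (f : ℝ → ℝ) (hf : Continuous f) (a b : ℝ) :
    Gfun f b - Gfun f a = ∫ t in a..b, f t := by
  have h := intervalIntegral.integral_add_adjacent_intervals (μ := MeasureTheory.volume)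
    (hf.intervalIntegrable 0 a) (hf.intervalIntegrable a b)
  simp only [Gfun]
  linarith [h]

lemma Gfun_mono_pos (f : ℝ → ℝ) (hf : Continuous f) (hsf : ∀ s : ℝ, 0 ≤ s * f s)
    {a b : ℝ} (ha : 0 < a) (hab : a ≤ b) : 0 ≤ Gfun f b - Gfun f a := by
  rw [Gfun_diff f hf]
  apply intervalIntegral.integral_nonneg hab
  intro x hx
  have hx0 : 0 < x := lt_of_lt_of_le ha hx.1
  nlinarith [hsf x]

lemma Gfun_anti_neg (f : ℝ → ℝ) (hf : Continuous f) (hsf : ∀ s : ℝ, 0 ≤ s * f s)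
    {a b : ℝ} (hb : b < 0) (hab : a ≤ b) : 0 ≤ Gfun f a - Gfun f b := by
  have : Gfun f b - Gfun f a ≤ 0 := by
    rw [Gfun_diff f hf]
    have : ∫ t in a..b, (0:ℝ) - f t ≥ 0 := by
      apply intervalIntegral.integral_nonneg hab
      intro x hx
      have hx0 : x < 0 := lt_of_le_of_lt hx.2 hb
      nlinarith [hsf x]
    have h2 : ∫ t in a..b, (0:ℝ) - f t = -∫ t in a..b, f t := by
      simp [intervalIntegral.integral_neg]
    linarith [this, h2 ▸ this]
  linarith

/-- s · f_k(s) ≥ 0 for every s ∈ ℝ. -/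
theorem stmt_5 (f : ℝ → ℝ) (hf : Continuous f) (hsf : ∀ s : ℝ, 0 ≤ s * f s)
    (k : ℕ) (hk : 0 < k) :
    ∀ s : ℝ, 0 ≤ s * strauss f k s := by
  intro s
  have hkR : (0:ℝ) < k := by exact_mod_cast hk
  have hik : (0:ℝ) < 1/(k:ℝ) := by positivity
  unfold strauss
  simp only []
  split_ifs with h1 h2 h3 h4 h5
  · -- s ≤ -k
    have hG := Gfun_anti_neg f hf hsf (a := -(k:ℝ) - 1/(k:ℝ)) (b := -(k:ℝ))
      (by linarith) (by linarith)
    have hs : s ≤ 0 := by linarith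
    nlinarith [mul_nonneg (mul_nonneg (neg_nonneg.2 hs) hkR.le) hG]
  · -- -k < s ≤ -1/k
    have hG := Gfun_anti_neg f hf hsf (a := s - 1/(k:ℝ)) (b := s)
      (by linarith) (by linarith)
    have hs : s ≤ 0 := by linarith
    nlinarith [mul_nonneg (mul_nonneg (neg_nonneg.2 hs) hkR.le) hG]
  · -- -1/k < s ≤ 0
    have h2k : 1/(k:ℝ) ≤ 2/(k:ℝ) := by
      rw [div_le_div_iff₀ hkR hkR]; nlinarith
    have hG := Gfun_anti_neg f hf hsf (a := -(2/(k:ℝ))) (b := -(1/(k:ℝ)))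
      (by linarith) (by linarith)
    nlinarith [mul_nonneg (mul_nonneg (sq_nonneg (k:ℝ)) (sq_nonneg s)) hG]
  · -- 0 < s ≤ 1/k
    have hG := Gfun_mono_pos f hf hsf (a := 1/(k:ℝ)) (b := 2/(k:ℝ))
      hik (by rw [div_le_div_iff₀ hkR hkR]; nlinarith)
    nlinarith [mul_nonneg (mul_nonneg (sq_nonneg (k:ℝ)) (sq_nonneg s)) hG]
  · -- 1/k < s ≤ k
    have hs : 0 < s := by linarith
    have hG := Gfun_mono_pos f hf hsf (a := s) (b := s + 1/(k:ℝ)) hs (by linarith)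
    nlinarith [mul_nonneg (mul_nonneg hs.le hkR.le) hG]
  · -- s > k
    have hs : 0 < s := by linarith
    have hG := Gfun_mono_pos f hf hsf (a := (k:ℝ)) (b := (k:ℝ) + 1/(k:ℝ)) hkR (by linarith)
    nlinarith [mul_nonneg (mul_nonneg hs.le hkR.le) hG]
end

section
/- Let f : ℝ → ℝ be continuous with s·f(s) ≥ 0 for all s, let G(s) = ∫₀^s f(ξ)dξ, and define f_k as in the Strauss approximation (piecewise in terms of difference quotients of G). Then for each k ∈ ℕ, f_k is Lipschitz continuous: there exists c_k > 0 such that |f_k(ξ) − f_k(η)| ≤ c_k|ξ − η| for all ξ, η ∈ ℝ. -/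
open Set

theorem Set.EqOn.lipschitzOnWith_iff {α β : Type*} [PseudoEMetricSpace α] [PseudoEMetricSpace β]
    {f g : α → β} {s : Set α} {K : NNReal} (h : EqOn f g s) :
    LipschitzOnWith K f s ↔ LipschitzOnWith K g s := by
  constructor <;> intro hf x hx y hy
  · simpa only [← h hx, ← h hy] using hf hx hy
  · simpa only [h hx, h hy] using hf hx hy

theorem LipschitzOnWith.union_of_le {E : Type*} [PseudoMetricSpace E] {g : ℝ → E}
    {K L : NNReal} {s t : Set ℝ} {b : ℝ} (hs : LipschitzOnWith K g s)
    (ht : LipschitzOnWith L g t) (hsb : s ⊆ Iic b) (htb : t ⊆ Ici b) (hbs : b ∈ s)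
    (hbt : b ∈ t) : LipschitzOnWith (max K L) g (s ∪ t) := by
  replace hs := hs.weaken (le_max_left K L)
  replace ht := ht.weaken (le_max_right K L)
  have across : ∀ x ∈ s, ∀ y ∈ t, dist (g x) (g y) ≤ max K L * dist x y := by
    intro x hx y hy
    have hxb : x ≤ b := hsb hx
    have hby : b ≤ y := htb hy
    calc dist (g x) (g y) ≤ dist (g x) (g b) + dist (g b) (g y) := dist_triangle _ _ _
      _ ≤ max K L * dist x b + max K L * dist b y :=
          add_le_add (hs.dist_le_mul x hx b hbs) (ht.dist_le_mul b hbt y hy)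
      _ = max K L * dist x y := by
          simp only [Real.dist_eq, abs_of_nonpos (sub_nonpos.2 hxb),
            abs_of_nonpos (sub_nonpos.2 hby), abs_of_nonpos (sub_nonpos.2 (hxb.trans hby))]
          ring
  refine LipschitzOnWith.of_dist_le_mul ?_
  rintro x (hx | hx) y (hy | hy)
  · exact hs.dist_le_mul x hx y hy
  · exact across x hx y hy
  · rw [dist_comm, dist_comm x]; exact across y hy x hx
  · exact ht.dist_le_mul x hx y hy

theorem LipschitzOnWith.Icc_union_Ici {E : Type*} [PseudoMetricSpace E] {g : ℝ → E}
    {K L : NNReal} {a b : ℝ} (h₁ : LipschitzOnWith K g (Icc a b))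
    (h₂ : LipschitzOnWith L g (Ici b)) (hab : a ≤ b) : LipschitzOnWith (max K L) g (Ici a) := by
  simpa only [Set.Icc_union_Ici_eq_Ici hab] using
    h₁.union_of_le h₂ (fun _ hx => hx.2) (fun _ hx => hx) ⟨hab, le_rfl⟩ self_mem_Ici

theorem LipschitzOnWith.Iic_union_Ici {E : Type*} [PseudoMetricSpace E] {g : ℝ → E}
    {K L : NNReal} {a : ℝ} (h₁ : LipschitzOnWith K g (Iic a))
    (h₂ : LipschitzOnWith L g (Ici a)) : LipschitzWith (max K L) g := by
  have h := h₁.union_of_le h₂ (fun _ hx => hx) (fun _ hx => hx) self_mem_Iic self_mem_Ici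
  rwa [Set.Iic_union_Ici, lipschitzOnWith_univ] at h

theorem contDiff_Gfun {f : ℝ → ℝ} (hf : Continuous f) : ContDiff ℝ 1 (Gfun f) := by
  have hderiv : deriv (Gfun f) = f := funext (Continuous.deriv_integral f hf 0)
  refine contDiff_one_iff_deriv.2 ⟨fun x => ?_, by rwa [hderiv]⟩
  exact (hf.integral_hasStrictDerivAt 0 x).hasDerivAt.differentiableAt

theorem exists_lipschitzOnWith_Icc_of_eqOn {g φ : ℝ → ℝ} {a b : ℝ} (hφ : ContDiff ℝ 1 φ)
    (h : EqOn g φ (Icc a b)) : ∃ K, LipschitzOnWith K g (Icc a b) := by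
  obtain ⟨K, hK⟩ :=
    hφ.locallyLipschitz.locallyLipschitzOn.exists_lipschitzOnWith_of_compact isCompact_Icc
  exact ⟨K, h.lipschitzOnWith_iff.2 hK⟩

theorem Nat.eq_one_of_cast_le_one_div {k : ℕ} (hk : 0 < k) (h : (k : ℝ) ≤ 1 / k) : k = 1 := by
  have hk' : (1 : ℝ) ≤ k := by exact_mod_cast hk
  rw [le_div_iff₀ (by linarith)] at h
  exact_mod_cast (show (k : ℝ) = 1 by nlinarith)

section StraussPieces

variable (f : ℝ → ℝ) {k : ℕ}

theorem strauss_eqOn_Iic :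
    EqOn (strauss f k) (fun _ => -(k:ℝ) * (Gfun f (-(k:ℝ) - 1/(k:ℝ)) - Gfun f (-(k:ℝ))))
      (Iic (-(k:ℝ))) :=
  fun _ hs => if_pos hs

theorem strauss_eqOn_Icc_neg_neg_inv :
    EqOn (strauss f k) (fun s => -(k:ℝ) * (Gfun f (s - 1/(k:ℝ)) - Gfun f s))
      (Icc (-(k:ℝ)) (-(1/(k:ℝ)))) := by
  rintro s ⟨h₁, h₂⟩
  unfold strauss
  split_ifs with h
  · rw [le_antisymm h h₁]
  · rfl

variable (hk : 0 < k)
include hk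

theorem strauss_eqOn_Icc_neg_inv_zero :
    EqOn (strauss f k) (fun s => (k:ℝ)^2 * s * (Gfun f (-(2/(k:ℝ))) - Gfun f (-(1/(k:ℝ)))))
      (Icc (-(1/(k:ℝ))) 0) := by
  rintro s ⟨h₁, h₂⟩
  unfold strauss
  split_ifs with h h'
  · obtain rfl := Nat.eq_one_of_cast_le_one_div hk (by linarith)
    obtain rfl : s = -1 := by norm_num at h h₁; linarith
    norm_num
  · obtain rfl := le_antisymm h' h₁
    simp only
    rw [show -(1/(k:ℝ)) - 1/k = -(2/k) by ring]
    field_simp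
  · rfl

theorem strauss_eqOn_Icc_zero_inv :
    EqOn (strauss f k) (fun s => (k:ℝ)^2 * s * (Gfun f (2/(k:ℝ)) - Gfun f (1/(k:ℝ))))
      (Icc 0 (1/(k:ℝ))) := by
  have hk' : (0 : ℝ) < k := by exact_mod_cast hk
  have hinv : (0 : ℝ) < 1 / k := by positivity
  rintro s ⟨h₁, h₂⟩
  unfold strauss
  split_ifs with h h' h''
  · linarith
  · linarith
  · simp [le_antisymm h'' h₁]
  · rfl

theorem strauss_eqOn_Icc_inv_self :
    EqOn (strauss f k) (fun s => (k:ℝ) * (Gfun f (s + 1/(k:ℝ)) - Gfun f s))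
      (Icc (1/(k:ℝ)) k) := by
  have hk' : (0 : ℝ) < k := by exact_mod_cast hk
  have hinv : (0 : ℝ) < 1 / k := by positivity
  rintro s ⟨h₁, h₂⟩
  unfold strauss
  split_ifs with h h' h'' h'''
  · linarith
  · linarith
  · linarith
  · obtain rfl := le_antisymm h''' h₁
    simp only
    rw [show 1/(k:ℝ) + 1/k = 2/k by ring]
    field_simp
  · rfl

theorem strauss_eqOn_Ici :
    EqOn (strauss f k) (fun _ => (k:ℝ) * (Gfun f ((k:ℝ) + 1/(k:ℝ)) - Gfun f (k:ℝ)))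
      (Ici (k:ℝ)) := by
  have hk' : (0 : ℝ) < k := by exact_mod_cast hk
  have hinv : (0 : ℝ) < 1 / k := by positivity
  intro s (h₁ : (k:ℝ) ≤ s)
  unfold strauss
  split_ifs with h h' h'' h''' h''''
  · linarith
  · linarith
  · linarith
  · obtain rfl := Nat.eq_one_of_cast_le_one_div hk (h₁.trans h''')
    obtain rfl : s = 1 := by norm_num at h''' h₁; linarith
    norm_num
  · rw [le_antisymm h'''' h₁]
  · rfl

end StraussPieces

theorem strauss_lipschitzWith {f : ℝ → ℝ} (hf : Continuous f) {k : ℕ} (hk : 0 < k) :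
    ∃ K, LipschitzWith K (strauss f k) := by
  have hG := contDiff_Gfun hf
  have hk' : (1 : ℝ) ≤ k := by exact_mod_cast hk
  have hinv : (0 : ℝ) < 1 / k := by positivity
  have hinv_le : 1 / (k : ℝ) ≤ k := ((div_le_one (by linarith)).2 hk').trans hk'
  have h₁ : LipschitzOnWith 0 (strauss f k) (Iic (-(k : ℝ))) :=
    (strauss_eqOn_Iic f).lipschitzOnWith_iff.2 (LipschitzWith.const _).lipschitzOnWith
  obtain ⟨K₂, h₂⟩ := exists_lipschitzOnWith_Icc_of_eqOn (by fun_prop)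
    (strauss_eqOn_Icc_neg_neg_inv f)
  obtain ⟨K₃, h₃⟩ := exists_lipschitzOnWith_Icc_of_eqOn (by fun_prop)
    (strauss_eqOn_Icc_neg_inv_zero f hk)
  obtain ⟨K₄, h₄⟩ := exists_lipschitzOnWith_Icc_of_eqOn (by fun_prop)
    (strauss_eqOn_Icc_zero_inv f hk)
  obtain ⟨K₅, h₅⟩ := exists_lipschitzOnWith_Icc_of_eqOn (by fun_prop)
    (strauss_eqOn_Icc_inv_self f hk)
  have h₆ : LipschitzOnWith 0 (strauss f k) (Ici (k : ℝ)) :=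
    (strauss_eqOn_Ici f hk).lipschitzOnWith_iff.2 (LipschitzWith.const _).lipschitzOnWith
  exact ⟨_, h₁.Iic_union_Ici <| h₂.Icc_union_Ici (h₃.Icc_union_Ici
    (h₄.Icc_union_Ici (h₅.Icc_union_Ici h₆ hinv_le) hinv.le) (by linarith)) (by linarith)⟩

theorem stmt_6_general (f : ℝ → ℝ) (hf : Continuous f)
    (k : ℕ) (hk : 0 < k) :
    ∃ c : ℝ, 0 < c ∧ ∀ ξ η : ℝ, |strauss f k ξ - strauss f k η| ≤ c * |ξ - η| := by
  obtain ⟨K, hK⟩ := strauss_lipschitzWith hf hk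
  refine ⟨K + 1, by positivity, fun ξ η => ?_⟩
  calc |strauss f k ξ - strauss f k η| ≤ K * |ξ - η| := by
        simpa only [Real.dist_eq] using hK.dist_le_mul ξ η
    _ ≤ (K + 1) * |ξ - η| := by gcongr; linarith

/-- each f_k is Lipschitz: ∃ c_k > 0, |f_k ξ − f_k η| ≤ c_k |ξ − η|. -/
theorem stmt_6 (f : ℝ → ℝ) (hf : Continuous f) (hsf : ∀ s : ℝ, 0 ≤ s * f s)
    (k : ℕ) (hk : 0 < k) :
    ∃ c : ℝ, 0 < c ∧ ∀ ξ η : ℝ, |strauss f k ξ - strauss f k η| ≤ c * |ξ - η| :=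
  stmt_6_general f hf k hk
end

section
/- Let f : ℝ → ℝ be continuous with s·f(s) ≥ 0 for all s, and let f_k be the Strauss approximations defined via G(s) = ∫₀^s f. Then f_k converges to f uniformly on every bounded subset of ℝ. -/
/-!
Since `s f(s) ≥ 0` and `f` is continuous, `f 0 = 0`. For `|s| < k`, `f_k(s)` is either a
difference quotient of `G` over a step `± 1/k` at `s`, i.e. an average of `f` over an interval of
length `1/k` containing `s`, or, when `|s| ≤ 1/k`, it is `± k s` times an average of `f` over
`± [1/k, 2/k]`, which is small because `f 0 = 0`. Uniform continuity of `f` on a compact interval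
therefore makes `|f_k(s) - f(s)|` uniformly small on bounded sets.
-/

open Set Filter

lemma apply_zero_eq_zero_of_mul_nonneg {f : ℝ → ℝ} (hf : ContinuousAt f 0)
    (hsf : ∀ s, 0 ≤ s * f s) : f 0 = 0 := by
  have hright : 0 ≤ f 0 :=
    ge_of_tendsto (hf.tendsto.mono_left (nhdsWithin_le_nhds (s := Ioi 0))) <| by
      filter_upwards [self_mem_nhdsWithin] with x (hx : 0 < x)
      exact nonneg_of_mul_nonneg_right (hsf x) hx
  have hleft : f 0 ≤ 0 :=
    le_of_tendsto (hf.tendsto.mono_left (nhdsWithin_le_nhds (s := Iio 0))) <| by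
      filter_upwards [self_mem_nhdsWithin] with x (hx : x < 0)
      nlinarith [hsf x]
  exact le_antisymm hleft hright

lemma Gfun_sub_Gfun {f : ℝ → ℝ} (hf : Continuous f) (a b : ℝ) :
    Gfun f b - Gfun f a = ∫ t in a..b, f t :=
  intervalIntegral.integral_interval_sub_left (hf.intervalIntegrable _ _)
    (hf.intervalIntegrable _ _)

lemma abs_Gfun_slope_sub_le {f : ℝ → ℝ} (hf : Continuous f) {a b c C : ℝ} (hab : a ≠ b)
    (hC : ∀ t ∈ uIcc a b, |f t - c| ≤ C) :
    |(Gfun f b - Gfun f a) / (b - a) - c| ≤ C := by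
  have hba : b - a ≠ 0 := sub_ne_zero.2 hab.symm
  have hint : ∫ t in a..b, (f t - c) = (Gfun f b - Gfun f a) - (b - a) * c := by
    rw [intervalIntegral.integral_sub (hf.intervalIntegrable _ _) intervalIntegrable_const,
      intervalIntegral.integral_const, Gfun_sub_Gfun hf, smul_eq_mul]
  have hnorm : ‖∫ t in a..b, (f t - c)‖ ≤ C * |b - a| :=
    intervalIntegral.norm_integral_le_of_norm_le_const fun t ht =>
      hC t (uIoc_subset_uIcc ht)
  rw [hint, Real.norm_eq_abs] at hnorm
  rw [show (Gfun f b - Gfun f a) / (b - a) - c = ((Gfun f b - Gfun f a) - (b - a) * c) / (b - a)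
    by field_simp, abs_div, div_le_iff₀ (abs_pos.2 hba)]
  exact hnorm

lemma abs_mul_Gfun_slope_sub_le {f : ℝ → ℝ} (hf : Continuous f) {x a b s r C : ℝ}
    (hx : |x| ≤ 1) (hab : a ≠ b) (habr : uIcc a b ⊆ Icc (-r) r) (hsr : |s| ≤ r)
    (hC : ∀ t, |t| ≤ r → |f t| ≤ C) :
    |x * ((Gfun f b - Gfun f a) / (b - a)) - f s| ≤ 2 * C := by
  have hslope : |(Gfun f b - Gfun f a) / (b - a)| ≤ C := by
    simpa using abs_Gfun_slope_sub_le hf (c := 0) hab fun t ht =>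
      by simpa using hC t (abs_le.2 (habr ht))
  calc |x * ((Gfun f b - Gfun f a) / (b - a)) - f s|
      ≤ |x| * |(Gfun f b - Gfun f a) / (b - a)| + |f s| := by
        rw [← abs_mul]; exact abs_sub _ _
    _ ≤ 1 * C + C := by gcongr; exact hC s hsr
    _ = 2 * C := by ring

lemma abs_strauss_sub_le {f : ℝ → ℝ} (hf : Continuous f) (hf0 : f 0 = 0) {k : ℕ} {s R C : ℝ}
    (hsk : |s| < k) (hsR : |s| + 2 / k ≤ R)
    (hC : ∀ t ∈ Icc (-R) R, ∀ t' ∈ Icc (-R) R, dist t t' ≤ 2 / k → dist (f t) (f t') ≤ C) :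
    |strauss f k s - f s| ≤ 2 * C := by
  have hk : (0 : ℝ) < k := (abs_nonneg s).trans_lt hsk
  have hinv : 0 < 1 / (k : ℝ) := by positivity
  have htwo : 2 / (k : ℝ) = 2 * (1 / k) := by ring
  have hR : ∀ t, |t| ≤ R → t ∈ Icc (-R) R := fun t ht => abs_le.1 ht
  have hnear : ∀ t, |t - s| ≤ 1 / k → |f t - f s| ≤ C := fun t ht => by
    have hts : |t| ≤ |s| + 1 / k := by
      have := abs_add_le (t - s) s
      rw [sub_add_cancel] at this
      linarith
    exact hC t (hR t (by linarith)) s (hR s (by linarith)) (by rw [Real.dist_eq]; linarith)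
  have hsmall : ∀ t : ℝ, |t| ≤ 2 / k → |f t| ≤ C := fun t ht => by
    simpa [hf0] using hC t (hR t (by linarith [abs_nonneg s]))
      0 (hR 0 (by simp; linarith [abs_nonneg s])) (by simpa using ht)
  have hC0 : 0 ≤ C := (abs_nonneg _).trans (hsmall 0 (by simp; positivity))
  have hks : |s| ≤ 1 / k → |k * s| ≤ 1 := fun hs => by
    rw [abs_mul, abs_of_pos hk]
    exact (le_div_iff₀' hk).1 hs
  obtain ⟨hsk₁, hsk₂⟩ := abs_lt.1 hsk
  unfold strauss
  split_ifs with h₁ h₂ h₃ h₄ h₅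
  · linarith
  · rw [show -(k : ℝ) * (Gfun f (s - 1 / k) - Gfun f s)
        = (Gfun f (s - 1 / k) - Gfun f s) / (s - 1 / k - s) by field_simp; ring]
    refine (abs_Gfun_slope_sub_le hf (by linarith) fun t ht => hnear t ?_).trans (by linarith)
    simpa [abs_of_pos hinv] using abs_sub_left_of_mem_uIcc ht
  · rw [show (k : ℝ) ^ 2 * s * (Gfun f (-(2 / k)) - Gfun f (-(1 / k)))
        = -(k * s) * ((Gfun f (-(1 / k)) - Gfun f (-(2 / k))) / (-(1 / k) - -(2 / k))) by
      field_simp; ring]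
    have hs : |s| ≤ 1 / k := abs_le.2 ⟨by linarith, by linarith⟩
    refine abs_mul_Gfun_slope_sub_le hf (by rw [abs_neg]; exact hks hs) (by linarith) ?_
      (by linarith) hsmall
    rw [uIcc_of_le (by linarith)]
    exact Icc_subset_Icc (by linarith) (by linarith)
  · rw [show (k : ℝ) ^ 2 * s * (Gfun f (2 / k) - Gfun f (1 / k))
        = k * s * ((Gfun f (2 / k) - Gfun f (1 / k)) / (2 / k - 1 / k)) by
      field_simp; ring]
    have hs : |s| ≤ 1 / k := abs_le.2 ⟨by linarith, by linarith⟩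
    refine abs_mul_Gfun_slope_sub_le hf (hks hs) (by linarith) ?_ (by linarith) hsmall
    rw [uIcc_of_le (by linarith)]
    exact Icc_subset_Icc (by linarith) le_rfl
  · rw [show (k : ℝ) * (Gfun f (s + 1 / k) - Gfun f s)
        = (Gfun f (s + 1 / k) - Gfun f s) / (s + 1 / k - s) by field_simp; ring]
    refine (abs_Gfun_slope_sub_le hf (by linarith) fun t ht => hnear t ?_).trans (by linarith)
    simpa [abs_of_pos hinv] using abs_sub_left_of_mem_uIcc ht
  · linarith

/-- f_k → f uniformly on every bounded subset of ℝ. -/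
theorem stmt_7 (f : ℝ → ℝ) (hf : Continuous f) (hsf : ∀ s : ℝ, 0 ≤ s * f s)
    (S : Set ℝ) (hS : Bornology.IsBounded S) :
    TendstoUniformlyOn (fun (k : ℕ) (s : ℝ) => strauss f k s) f Filter.atTop S := by
  have hf0 := apply_zero_eq_zero_of_mul_nonneg hf.continuousAt hsf
  obtain ⟨M, hSM⟩ := hS.subset_closedBall 0
  rw [Metric.tendstoUniformlyOn_iff]
  intro ε hε
  obtain ⟨δ, hδ, hfδ⟩ := Metric.uniformContinuousOn_iff_le.1
    ((isCompact_Icc (a := -(M + 2)) (b := M + 2)).uniformContinuousOn_of_continuous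
      hf.continuousOn) (ε / 3) (by positivity)
  filter_upwards [tendsto_natCast_atTop_atTop.eventually_gt_atTop M,
    eventually_ge_atTop 1,
    (tendsto_const_div_atTop_nhds_zero_nat (2 : ℝ)).eventually (ge_mem_nhds hδ)]
    with k hMk hk hkδ s hs
  have hsM : |s| ≤ M := mem_closedBall_zero_iff.1 (hSM hs)
  have h2k : 2 / (k : ℝ) ≤ 2 := div_le_self zero_le_two (by exact_mod_cast hk)
  rw [dist_comm, Real.dist_eq]
  calc |strauss f k s - f s| ≤ 2 * (ε / 3) :=
        abs_strauss_sub_le hf hf0 (by linarith) (by linarith) fun t ht t' ht' htt' =>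
          hfδ t ht t' ht' (htt'.trans hkδ)
    _ < ε := by linarith
end

section
/- Let N ≥ 2 be an integer, α > 0, and p > q > 0 with p > N > q. Define H(t) := (p−N)·t^{p−q}·φ_N(α t^{N/(N−1)}) + α·(N/(N−1))·t^{((N−1)(p−q+1)+1)/(N−1)}·φ_{N−1}(α t^{N/(N−1)}) for t ≥ 0. Then H(0) = 0, H is strictly increasing on [0, ∞), and H(t) → ∞ as t → ∞. Consequently, for every Λ > 0 there exists a unique t₁ > 0 with H(t₁) = Λ(N − q). -/
/-- H(t) = (p−N)t^{p−q}φ_N(αt^{N/(N−1)})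
      + α(N/(N−1)) t^{((N−1)(p−q+1)+1)/(N−1)} φ_{N−1}(αt^{N/(N−1)}) -/
noncomputable def Hfun (N : ℕ) (p q α : ℝ) (t : ℝ) : ℝ :=
  (p - (N:ℝ)) * t ^ (p - q) * phiN N (α * t ^ ((N:ℝ)/((N:ℝ)-1))) +
    α * ((N:ℝ)/((N:ℝ)-1)) *
      t ^ ((((N:ℝ)-1) * (p - q + 1) + 1) / ((N:ℝ)-1)) *
      phiN (N - 1) (α * t ^ ((N:ℝ)/((N:ℝ)-1)))

open Filter Set

theorem Real.sum_range_pow_div_factorial_lt_exp (k : ℕ) {x : ℝ} (hx : 0 < x) :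
    ∑ j ∈ Finset.range k, x ^ j / (Nat.factorial j : ℝ) < Real.exp x := by
  calc ∑ j ∈ Finset.range k, x ^ j / (Nat.factorial j : ℝ)
      < ∑ j ∈ Finset.range (k + 1), x ^ j / (Nat.factorial j : ℝ) := by
        rw [Finset.sum_range_succ]
        exact lt_add_of_pos_right _ (by positivity)
    _ ≤ Real.exp x := Real.sum_le_exp_of_nonneg hx.le _

theorem hasDerivAt_pow_succ_div_factorial (k : ℕ) (x : ℝ) :
    HasDerivAt (fun y : ℝ => y ^ (k + 1) / (Nat.factorial (k + 1) : ℝ))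
      (x ^ k / (Nat.factorial k : ℝ)) x := by
  refine ((hasDerivAt_pow (k + 1) x).div_const _).congr_deriv ?_
  rw [Nat.factorial_succ, Nat.cast_mul, Nat.add_sub_cancel, Nat.cast_succ, mul_div_mul_left]
  positivity

theorem hasDerivAt_sum_range_succ_pow_div_factorial (k : ℕ) (x : ℝ) :
    HasDerivAt (fun y : ℝ => ∑ j ∈ Finset.range (k + 1), y ^ j / (Nat.factorial j : ℝ))
      (∑ j ∈ Finset.range k, x ^ j / (Nat.factorial j : ℝ)) x := by
  induction k with
  | zero => simpa using hasDerivAt_const x (1 : ℝ)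
  | succ k ih =>
    rw [Finset.sum_range_succ _ k]
    simp only [Finset.sum_range_succ _ (k + 1)]
    exact ih.fun_add (hasDerivAt_pow_succ_div_factorial k x)

theorem hasDerivAt_phiN (m : ℕ) (x : ℝ) : HasDerivAt (phiN m) (phiN (m - 1) x) x := by
  unfold phiN
  rcases Nat.eq_zero_or_eq_succ_pred (m - 1) with hm | hm
  · simpa [hm] using Real.hasDerivAt_exp x
  · have hm' : m - 1 - 1 = (m - 1).pred := Nat.pred_eq_sub_one.symm
    rw [hm', hm]
    exact (Real.hasDerivAt_exp x).sub (hasDerivAt_sum_range_succ_pow_div_factorial _ x)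

theorem phiN_pos (m : ℕ) {x : ℝ} (hx : 0 < x) : 0 < phiN m x :=
  sub_pos.2 (Real.sum_range_pow_div_factorial_lt_exp _ hx)

theorem phiN_nonneg_s13 (m : ℕ) {x : ℝ} (hx : 0 ≤ x) : 0 ≤ phiN m x :=
  sub_nonneg.2 (Real.sum_le_exp_of_nonneg hx _)

theorem continuous_phiN (m : ℕ) : Continuous (phiN m) :=
  continuous_iff_continuousAt.2 fun x => (hasDerivAt_phiN m x).continuousAt

theorem phiN_strictMonoOn (m : ℕ) : StrictMonoOn (phiN m) (Ici 0) := by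
  refine strictMonoOn_of_deriv_pos (convex_Ici 0) (continuous_phiN m).continuousOn fun x hx => ?_
  rw [interior_Ici] at hx
  rw [(hasDerivAt_phiN m x).deriv]
  exact phiN_pos _ hx

theorem strictMonoOn_mul_rpow_mul_phiN {c a α b : ℝ} (hc : 0 < c) (ha : 0 < a) (hα : 0 < α)
    (hb : 0 ≤ b) (m : ℕ) :
    StrictMonoOn (fun t : ℝ => c * t ^ a * phiN m (α * t ^ b)) (Ici 0) := by
  intro x (hx : 0 ≤ x) y (hy : 0 ≤ y) hxy
  have hy0 : 0 < y := hx.trans_lt hxy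
  calc c * x ^ a * phiN m (α * x ^ b)
      ≤ c * x ^ a * phiN m (α * y ^ b) := by
        refine mul_le_mul_of_nonneg_left ((phiN_strictMonoOn m).monotoneOn
          (mem_Ici.2 (by positivity)) (mem_Ici.2 (by positivity)) (by gcongr)) (by positivity)
    _ < c * y ^ a * phiN m (α * y ^ b) := by
        refine mul_lt_mul_of_pos_right ?_ (phiN_pos m (by positivity))
        gcongr

theorem StrictMonoOn.existsUnique_pos_eq {f : ℝ → ℝ} (hmono : StrictMonoOn f (Ici 0))
    (hcont : ContinuousOn f (Ici 0)) (h0 : f 0 = 0) (htop : Tendsto f atTop atTop) {y : ℝ}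
    (hy : 0 < y) : ∃! t, 0 < t ∧ f t = y := by
  obtain ⟨T, hyT, hT⟩ := ((htop.eventually_ge_atTop y).and (eventually_ge_atTop 0)).exists
  obtain ⟨t, ⟨ht, -⟩, hft⟩ :=
    intermediate_value_Ioc hT (hcont.mono Icc_subset_Ici_self) ⟨by rwa [h0], hyT⟩
  refine ⟨t, ⟨ht, hft⟩, fun s ⟨hs, hfs⟩ => hmono.injOn hs.le ht.le (hfs.trans hft.symm)⟩

section Hfun

variable {N : ℕ} {p q α : ℝ}

theorem natCast_div_natCast_sub_one_pos (hN : 2 ≤ N) : 0 < (N : ℝ) / ((N : ℝ) - 1) := by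
  have : (2 : ℝ) ≤ N := by exact_mod_cast hN
  apply div_pos <;> linarith

theorem Hfun_exponent_pos (hN : 2 ≤ N) (hqp : q < p) :
    0 < (((N : ℝ) - 1) * (p - q + 1) + 1) / ((N : ℝ) - 1) := by
  have : (2 : ℝ) ≤ N := by exact_mod_cast hN
  apply div_pos <;> nlinarith

theorem Hfun_zero (hN : 2 ≤ N) (hqp : q < p) : Hfun N p q α 0 = 0 := by
  simp [Hfun, Real.zero_rpow (sub_pos.2 hqp).ne', Real.zero_rpow (Hfun_exponent_pos hN hqp).ne']

theorem Hfun_strictMonoOn (hN : 2 ≤ N) (hqp : q < p) (hp : (N : ℝ) < p) (hα : 0 < α) :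
    StrictMonoOn (Hfun N p q α) (Ici 0) :=
  have he := natCast_div_natCast_sub_one_pos hN
  (strictMonoOn_mul_rpow_mul_phiN (sub_pos.2 hp) (sub_pos.2 hqp) hα he.le N).add
    (strictMonoOn_mul_rpow_mul_phiN (mul_pos hα he) (Hfun_exponent_pos hN hqp) hα he.le (N - 1))

theorem continuous_Hfun (hN : 2 ≤ N) (hqp : q < p) : Continuous (Hfun N p q α) := by
  have hrpow : ∀ {a : ℝ}, 0 < a → Continuous fun t : ℝ => t ^ a :=
    fun ha => continuous_id.rpow_const fun _ => Or.inr ha.le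
  have hu : Continuous fun t : ℝ => α * t ^ ((N : ℝ) / ((N : ℝ) - 1)) :=
    continuous_const.mul (hrpow (natCast_div_natCast_sub_one_pos hN))
  exact ((continuous_const.mul (hrpow (sub_pos.2 hqp))).mul ((continuous_phiN N).comp hu)).add
    ((continuous_const.mul (hrpow (Hfun_exponent_pos hN hqp))).mul
      ((continuous_phiN (N - 1)).comp hu))

theorem mul_rpow_mul_phiN_le_Hfun (hN : 2 ≤ N) (hp : (N : ℝ) < p) (hα : 0 < α) {t : ℝ}
    (ht : 1 ≤ t) : (p - N) * t ^ (p - q) * phiN N α ≤ Hfun N p q α t := by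
  have he := natCast_div_natCast_sub_one_pos hN
  have ht0 : 0 < t := one_pos.trans_le ht
  have hu : α ≤ α * t ^ ((N : ℝ) / ((N : ℝ) - 1)) :=
    le_mul_of_one_le_right hα.le (Real.one_le_rpow ht he.le)
  have hphi : phiN N α ≤ phiN N (α * t ^ ((N : ℝ) / ((N : ℝ) - 1))) :=
    (phiN_strictMonoOn N).monotoneOn hα.le (hα.le.trans hu) hu
  have hsecond : 0 ≤ α * ((N : ℝ) / ((N : ℝ) - 1)) *
      t ^ ((((N : ℝ) - 1) * (p - q + 1) + 1) / ((N : ℝ) - 1)) *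
      phiN (N - 1) (α * t ^ ((N : ℝ) / ((N : ℝ) - 1))) :=
    mul_nonneg (by positivity) (phiN_nonneg_s13 _ (by positivity))
  have hpN : 0 ≤ p - N := (sub_pos.2 hp).le
  unfold Hfun
  nlinarith [mul_le_mul_of_nonneg_left hphi (mul_nonneg hpN (Real.rpow_nonneg ht0.le (p - q)))]

theorem tendsto_Hfun_atTop (hN : 2 ≤ N) (hqp : q < p) (hp : (N : ℝ) < p) (hα : 0 < α) :
    Tendsto (Hfun N p q α) atTop atTop := by
  refine tendsto_atTop_mono' _ ((eventually_ge_atTop 1).mono fun t ht =>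
    mul_rpow_mul_phiN_le_Hfun hN hp hα ht) ?_
  exact ((tendsto_rpow_atTop (sub_pos.2 hqp)).const_mul_atTop (sub_pos.2 hp)).atTop_mul_const
    (phiN_pos N hα)

end Hfun

theorem stmt_13_general (N : ℕ) (hN : 2 ≤ N) (p q α : ℝ)
    (hqN : q < (N:ℝ)) (hp : (N:ℝ) < p) (hα : 0 < α) :
    Hfun N p q α 0 = 0 ∧
    StrictMonoOn (Hfun N p q α) (Set.Ici (0:ℝ)) ∧
    Filter.Tendsto (Hfun N p q α) Filter.atTop Filter.atTop ∧
    ∀ Λ : ℝ, 0 < Λ →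
      ∃! t₁ : ℝ, 0 < t₁ ∧ Hfun N p q α t₁ = Λ * ((N:ℝ) - q) := by
  have hqp : q < p := hqN.trans hp
  have hmono := Hfun_strictMonoOn hN hqp hp hα
  have htop := tendsto_Hfun_atTop hN hqp hp hα
  refine ⟨Hfun_zero hN hqp, hmono, htop, fun Λ hΛ => ?_⟩
  exact hmono.existsUnique_pos_eq (continuous_Hfun hN hqp).continuousOn (Hfun_zero hN hqp) htop
    (mul_pos hΛ (sub_pos.2 hqN))

/-- H(0) = 0, H is strictly increasing on [0,∞), H(t) → ∞,
and for every Λ > 0 there is a unique t₁ > 0 with H(t₁) = Λ(N − q). -/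
theorem stmt_13 (N : ℕ) (hN : 2 ≤ N) (p q α : ℝ)
    (hq : 1 < q) (hqN : q < (N:ℝ)) (hp : (N:ℝ) < p) (hα : 0 < α) :
    Hfun N p q α 0 = 0 ∧
    StrictMonoOn (Hfun N p q α) (Set.Ici (0:ℝ)) ∧
    Filter.Tendsto (Hfun N p q α) Filter.atTop Filter.atTop ∧
    ∀ Λ : ℝ, 0 < Λ →
      ∃! t₁ : ℝ, 0 < t₁ ∧ Hfun N p q α t₁ = Λ * ((N:ℝ) - q) :=
  stmt_13_general N hN p q α hqN hp hα
end
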